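/- Let (h_n)_{n∈ℤ} be an IID sequence of real random variables with ℙ(h_1 ≠ 0) > 0, and let \widehat{f}_h(y) := clamp(y + 2h, −Γ, Γ) (project y + 2h onto [−Γ, Γ]). Then the Markov chain defined by iterating \widehat{f}_{h_n} admits a unique invariant probability measure on [−Γ, Γ], and there is a unique stationary process (\widehat{l}_n)_{n∈ℤ} satisfying \widehat{l}_n = \widehat{f}_{h_n}(\widehat{l}_{n-1}) for all n. -/

import Mathlib

open MeasureTheory ProbabilityTheory

/-- Hard-wall projection onto `[-Γ, Γ]`. -/
noncomputable def hatb (Γ x : ℝ) : ℝ := max (-Γ) (min Γ x)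

/-- The hard-wall one-step map `\widehat{f}_h(y) = clamp(y + 2h, -Γ, Γ)`. -/
noncomputable def hatf (Γ h y : ℝ) : ℝ := hatb Γ (y + 2 * h)


open Filter
open scoped ENNReal

section basic
variable {Γ x y c : ℝ}

lemma hatb_mem_Icc (hΓ : 0 ≤ Γ) (x : ℝ) : hatb Γ x ∈ Set.Icc (-Γ) Γ :=
  ⟨le_max_left _ _, max_le (by linarith) (min_le_left _ _)⟩

lemma monotone_hatb (Γ : ℝ) : Monotone (hatb Γ) := fun a b hab =>
  max_le_max le_rfl (min_le_min le_rfl hab)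

lemma continuous_hatb (Γ : ℝ) : Continuous (hatb Γ) :=
  continuous_const.max (continuous_const.min continuous_id)

lemma min_le_hatb : min Γ x ≤ hatb Γ x := le_max_right _ _

lemma hatb_neg (hΓ : 0 ≤ Γ) (x : ℝ) : hatb Γ (-x) = - hatb Γ x := by
  unfold hatb
  rcases le_total x (-Γ) with h | h
  · rw [min_eq_right (le_trans h (by linarith)), max_eq_left h,
      min_eq_left (by linarith), max_eq_right (by linarith), neg_neg]
  · rcases le_total Γ x with h2 | h2
    · rw [min_eq_right (by linarith : -x ≤ Γ), max_eq_left (by linarith : -x ≤ -Γ),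
        min_eq_left h2, max_eq_right (by linarith : -Γ ≤ Γ)]
    · rw [min_eq_right h2, max_eq_right h, min_eq_right (by linarith : -x ≤ Γ),
        max_eq_right (by linarith : -Γ ≤ -x)]

lemma monotone_hatf (Γ c : ℝ) : Monotone (hatf Γ c) := fun a b hab =>
  monotone_hatb Γ (by linarith)

lemma hatf_mem_Icc (hΓ : 0 ≤ Γ) (c y : ℝ) : hatf Γ c y ∈ Set.Icc (-Γ) Γ :=
  hatb_mem_Icc hΓ _

lemma continuous_hatf2 (Γ : ℝ) : Continuous (fun q : ℝ × ℝ => hatf Γ q.2 q.1) :=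
  (continuous_hatb Γ).comp (continuous_fst.add (continuous_const.mul continuous_snd))

lemma measurable_hatf2 (Γ : ℝ) : Measurable (fun q : ℝ × ℝ => hatf Γ q.2 q.1) :=
  (continuous_hatf2 Γ).measurable

end basic

section chain
variable {Ω : Type*}

/-- The chain run for `k` steps ending at time `n`, starting from value `y`
(so the first step uses `h (n-k+1)` and the last uses `h n`). -/
noncomputable def chainD (Γ : ℝ) (h : ℤ → Ω → ℝ) : ℕ → ℤ → ℝ → Ω → ℝ
  | 0, _, y, _ => y
  | k+1, n, y, ω => hatf Γ (h n ω) (chainD Γ h k (n-1) y ω)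

variable {Γ : ℝ} {h : ℤ → Ω → ℝ}

lemma chainD_mem_Icc (hΓ : 0 ≤ Γ) {y : ℝ} (hy : y ∈ Set.Icc (-Γ) Γ) :
    ∀ (k : ℕ) (n : ℤ) (ω : Ω), chainD Γ h k n y ω ∈ Set.Icc (-Γ) Γ
  | 0, _, _ => hy
  | k+1, n, ω => hatf_mem_Icc hΓ _ _

lemma chainD_mono (k : ℕ) (n : ℤ) (ω : Ω) :
    Monotone (fun y => chainD Γ h k n y ω) := by
  induction k generalizing n with
  | zero => exact fun a b hab => hab
  | succ k ih => exact fun a b hab => monotone_hatf Γ _ (ih (n-1) hab)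

lemma chainD_add (k m : ℕ) (n : ℤ) (y : ℝ) (ω : Ω) :
    chainD Γ h (k + m) n y ω = chainD Γ h k n (chainD Γ h m (n - (k : ℤ)) y ω) ω := by
  induction k generalizing n with
  | zero => simp [chainD]
  | succ k ih =>
      have e1 : k + 1 + m = (k + m) + 1 := by omega
      have e2 : n - 1 - (k : ℤ) = n - ((k+1 : ℕ) : ℤ) := by push_cast; ring
      rw [e1]
      show hatf Γ (h n ω) (chainD Γ h (k + m) (n-1) y ω) = _
      rw [ih (n-1), e2]
      rfl

/-- Any pointwise solution of the recursion is given by running the chain. -/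
lemma chainD_sol {L' : ℤ → Ω → ℝ} (hL' : ∀ n ω, L' n ω = hatf Γ (h n ω) (L' (n - 1) ω))
    (k : ℕ) (n : ℤ) (ω : Ω) : L' n ω = chainD Γ h k n (L' (n - (k : ℤ)) ω) ω := by
  induction k generalizing n with
  | zero => simp [chainD]
  | succ k ih =>
      have e2 : n - 1 - (k : ℤ) = n - ((k+1 : ℕ) : ℤ) := by push_cast; ring
      rw [hL' n ω, ih (n-1), e2]
      rfl

lemma chainD_lower {ε : ℝ} (hε : 0 ≤ ε) {k : ℕ} {n : ℤ} {y : ℝ} {ω : Ω}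
    (hgood : ∀ j : ℕ, j < k → ε < h (n - (j : ℤ)) ω) :
    min Γ (y + 2 * ε * k) ≤ chainD Γ h k n y ω := by
  induction k generalizing n with
  | zero =>
      have e : y + 2*ε*((0:ℕ):ℝ) = y := by norm_num
      show min Γ (y + 2*ε*((0:ℕ):ℝ)) ≤ y
      rw [e]; exact min_le_right _ _
  | succ k ih =>
      have hprev : min Γ (y + 2 * ε * k) ≤ chainD Γ h k (n-1) y ω := by
        apply ih
        intro j hj
        have h2 := hgood (j+1) (by omega)
        have e : n - ((j:ℤ)+1) = n - 1 - (j:ℤ) := by ring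
        push_cast at h2
        rw [e] at h2
        exact h2
      have hn : ε < h n ω := by simpa using hgood 0 (by omega)
      show _ ≤ hatf Γ (h n ω) (chainD Γ h k (n-1) y ω)
      refine le_trans ?_ min_le_hatb
      push_cast
      refine le_min (min_le_left _ _) ?_
      have hstep : min Γ (y + 2*ε*(k:ℝ)) + 2*ε ≤ chainD Γ h k (n-1) y ω + 2 * h n ω := by
        linarith
      refine le_trans ?_ hstep
      rcases le_total Γ (y + 2*ε*(k:ℝ)) with hc | hc
      · rw [min_eq_left hc]
        exact le_trans (min_le_left _ _) (by linarith)
      · rw [min_eq_right hc]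
        exact le_trans (min_le_right _ _) (by linarith)

lemma chainD_neg (hΓ : 0 ≤ Γ) (k : ℕ) (n : ℤ) (y : ℝ) (ω : Ω) :
    chainD Γ (fun i ω => -(h i ω)) k n (-y) ω = -(chainD Γ h k n y ω) := by
  induction k generalizing n with
  | zero => rfl
  | succ k ih =>
      show hatf Γ (-(h n ω)) (chainD Γ (fun i ω => -(h i ω)) k (n-1) (-y) ω) = _
      rw [ih (n-1)]
      show hatb Γ _ = -(hatb Γ _)
      rw [← hatb_neg hΓ]
      congr 1
      ring

end chain

section meas
variable {Ω : Type*} {m' : MeasurableSpace Ω} {Γ : ℝ} {h : ℤ → Ω → ℝ}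

lemma chainD_measurable : ∀ {k : ℕ} {n : ℤ},
    (∀ j : ℕ, j < k → Measurable[m'] (h (n - (j:ℤ)))) → ∀ y,
    Measurable[m'] (fun ω => chainD Γ h k n y ω)
  | 0, n, _, y => measurable_const
  | k+1, n, hm, y => by
      have hprev : Measurable[m'] (fun ω => chainD Γ h k (n-1) y ω) := by
        apply chainD_measurable
        intro j hj
        have e : n - 1 - (j:ℤ) = n - ((j:ℤ)+1) := by ring
        have := hm (j+1) (by omega)
        push_cast at this
        rwa [← e] at this
      have h0 : Measurable[m'] (h n) := by simpa using hm 0 (by omega)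
      exact (measurable_hatf2 Γ).comp (hprev.prodMk h0)

lemma chainD_pin_top (hΓ : 0 < Γ) {ε : ℝ} (hε : 0 < ε) {N : ℕ} (hN : Γ ≤ ε * N)
    {n : ℤ} {ω : Ω} {y : ℝ} (hy : y ∈ Set.Icc (-Γ) Γ)
    (hgood : ∀ j : ℕ, j < N → ε < h (n - (j:ℤ)) ω) :
    chainD Γ h N n y ω = Γ := by
  refine le_antisymm (chainD_mem_Icc hΓ.le hy N n ω).2 ?_
  have hl := chainD_lower (Γ := Γ) (y := y) hε.le hgood
  have : Γ ≤ min Γ (y + 2 * ε * N) := le_min le_rfl (by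
    have := hy.1
    linarith)
  linarith [hl, this]

/-- The event that the `N` driving variables ending at time `M` all lie in `S₀`. -/
def blockSet (h : ℤ → Ω → ℝ) (S₀ : Set ℝ) (N : ℕ) (M : ℤ) : Set Ω :=
  {ω | ∀ j : ℕ, j < N → h (M - (j:ℤ)) ω ∈ S₀}

lemma blockSet_eq (S₀ : Set ℝ) (N : ℕ) (M : ℤ) :
    blockSet h S₀ N M = ⋂ (j : ℕ), ⋂ (_ : j < N), h (M - (j:ℤ)) ⁻¹' S₀ := by
  ext ω; simp [blockSet]

end meas

section meas2
variable {Ω : Type*} [MeasurableSpace Ω] {Γ : ℝ} {h : ℤ → Ω → ℝ}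

lemma chainD_measurable2 (hmeas : ∀ i, Measurable (h i)) :
    ∀ (k : ℕ) (n : ℤ), Measurable (fun q : ℝ × Ω => chainD Γ h k n q.1 q.2)
  | 0, _ => measurable_fst
  | k+1, n => by
      have hprev := chainD_measurable2 hmeas k (n-1)
      exact (measurable_hatf2 Γ).comp (hprev.prodMk ((hmeas n).comp measurable_snd))

end meas2

section prob
variable {Ω : Type*} [MeasurableSpace Ω] {P : Measure Ω} [IsProbabilityMeasure P]
  {Γ : ℝ} {h : ℤ → Ω → ℝ}

/-- The σ-algebra generated by the variables `h i`, `i ∈ I`. -/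
def mWin (h : ℤ → Ω → ℝ) (I : Set ℤ) : MeasurableSpace Ω :=
  ⨆ i ∈ I, MeasurableSpace.comap (h i) inferInstance

lemma mWin_le (hmeas : ∀ n, Measurable (h n)) (I : Set ℤ) : mWin h I ≤ ‹MeasurableSpace Ω› :=
  iSup₂_le fun i _ => (hmeas i).comap_le

lemma measurable_mWin {I : Set ℤ} {i : ℤ} (hi : i ∈ I) : Measurable[mWin h I] (h i) :=
  Measurable.of_comap_le (le_iSup₂ (f := fun i _ => MeasurableSpace.comap (h i) inferInstance) i hi)

lemma windowIndep (hmeas : ∀ n, Measurable (h n))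
    (hindep : iIndepFun h P)
    {I J : Set ℤ} (hIJ : Disjoint I J) {s t : Set Ω}
    (hs : MeasurableSet[mWin h I] s) (ht : MeasurableSet[mWin h J] t) :
    P (s ∩ t) = P s * P t := by
  have hind : Indep (mWin h I) (mWin h J) P :=
    indep_iSup_of_disjoint (fun i => (hmeas i).comap_le) hindep.iIndep hIJ
  exact (Indep_iff _ _ _).1 hind s t hs ht

lemma chainD_measurable_mWin {I : Set ℤ} {k : ℕ} {n : ℤ}
    (hsub : ∀ j : ℕ, j < k → n - (j:ℤ) ∈ I) (y : ℝ) :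
    Measurable[mWin h I] (fun ω => chainD Γ h k n y ω) :=
  chainD_measurable (fun j hj => measurable_mWin (hsub j hj)) y

lemma blockSet_measurable_mWin {S₀ : Set ℝ} (hS₀ : MeasurableSet S₀) {N : ℕ} {M : ℤ}
    {I : Set ℤ} (hsub : ∀ j : ℕ, j < N → M - (j:ℤ) ∈ I) :
    MeasurableSet[mWin h I] (blockSet h S₀ N M) := by
  rw [blockSet_eq]
  exact MeasurableSet.iInter fun j => MeasurableSet.iInter fun hj =>
    measurable_mWin (hsub j hj) hS₀

lemma blockSet_measurable (hmeas : ∀ n, Measurable (h n)) {S₀ : Set ℝ}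
    (hS₀ : MeasurableSet S₀) {N : ℕ} {M : ℤ} : MeasurableSet (blockSet h S₀ N M) :=
  mWin_le hmeas Set.univ _ (blockSet_measurable_mWin (I := Set.univ) hS₀ fun _ _ => trivial)

lemma blockSet_prob (hmeas : ∀ n, Measurable (h n))
    (hindep : iIndepFun h P)
    (hident : ∀ n, Measure.map (h n) P = Measure.map (h 0) P)
    {S₀ : Set ℝ} (hS₀ : MeasurableSet S₀) (N : ℕ) (M : ℤ) :
    P (blockSet h S₀ N M) = P (h 0 ⁻¹' S₀) ^ N := by
  classical
  have hone : ∀ i, P (h i ⁻¹' S₀) = P (h 0 ⁻¹' S₀) := by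
    intro i
    rw [← Measure.map_apply (hmeas i) hS₀, ← Measure.map_apply (hmeas 0) hS₀, hident i]
  set F : Finset ℤ := (Finset.range N).image (fun j : ℕ => M - (j:ℤ)) with hF
  have hinj : Function.Injective (fun j : ℕ => M - (j:ℤ)) := by
    intro a b hab
    simp only at hab
    omega
  have hset : blockSet h S₀ N M = ⋂ i ∈ F, h i ⁻¹' S₀ := by
    ext ω
    simp only [blockSet, Set.mem_setOf_eq, Set.mem_iInter, hF, Finset.mem_image,
      Finset.mem_range]
    constructor
    · rintro hω i ⟨j, hj, rfl⟩
      exact hω j hj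
    · intro hω j hj
      exact hω (M - j) ⟨j, hj, rfl⟩
  rw [hset, hindep.meas_biInter (fun i _ => ⟨S₀, hS₀, rfl⟩)]
  rw [Finset.prod_congr rfl (fun i _ => hone i), Finset.prod_const]
  rw [Finset.card_image_of_injective _ hinj, Finset.card_range]

lemma noGood_prob_le (hmeas : ∀ n, Measurable (h n))
    (hindep : iIndepFun h P)
    (hident : ∀ n, Measure.map (h n) P = Measure.map (h 0) P)
    {S₀ : Set ℝ} (hS₀ : MeasurableSet S₀) (N : ℕ) (n : ℤ) :
    ∀ m : ℕ, P (⋂ b ∈ Finset.range m, (blockSet h S₀ N (n - (b:ℤ) * N))ᶜ)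
      ≤ (1 - P (h 0 ⁻¹' S₀) ^ N) ^ m := by
  intro m
  induction m with
  | zero => simp
  | succ m ih =>
      rw [Finset.range_add_one]
      rw [Finset.set_biInter_insert]
      have hIJ : Disjoint (Set.Iic (n - (m:ℤ) * N)) (Set.Ioi (n - (m:ℤ) * N)) :=
        Set.Iic_disjoint_Ioi le_rfl
      have hmeas1 : MeasurableSet[mWin h (Set.Iic (n - (m:ℤ) * N))]
          ((blockSet h S₀ N (n - (m:ℤ) * N))ᶜ) := by
        refine (blockSet_measurable_mWin hS₀ fun j hj => ?_).compl
        simp only [Set.mem_Iic]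
        omega
      have hmeas2 : MeasurableSet[mWin h (Set.Ioi (n - (m:ℤ) * N))]
          (⋂ b ∈ Finset.range m, (blockSet h S₀ N (n - (b:ℤ) * N))ᶜ) := by
        refine Set.Finite.measurableSet_biInter (Finset.finite_toSet _) fun b hb => ?_
        refine (blockSet_measurable_mWin hS₀ fun j hj => ?_).compl
        have hbm : b < m := Finset.mem_range.1 (Finset.mem_coe.1 hb)
        simp only [Set.mem_Ioi]
        have hb' : (b:ℤ) ≤ (m:ℤ) - 1 := by omega
        have h1 : (b:ℤ) * N ≤ ((m:ℤ) - 1) * N :=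
          mul_le_mul_of_nonneg_right hb' (by positivity)
        have hj' : (j:ℤ) < (N:ℤ) := by exact_mod_cast hj
        have expand : ((m:ℤ) - 1) * N = (m:ℤ) * N - N := by ring
        linarith
      have hswap : P ((blockSet h S₀ N (n - (m:ℤ) * N))ᶜ ∩
          ⋂ b ∈ Finset.range m, (blockSet h S₀ N (n - (b:ℤ) * N))ᶜ)
          = P ((blockSet h S₀ N (n - (m:ℤ) * N))ᶜ)
            * P (⋂ b ∈ Finset.range m, (blockSet h S₀ N (n - (b:ℤ) * N))ᶜ) :=
        windowIndep hmeas hindep hIJ hmeas1 hmeas2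
      rw [hswap]
      have hcompl : P ((blockSet h S₀ N (n - (m:ℤ) * N))ᶜ) = 1 - P (h 0 ⁻¹' S₀) ^ N := by
        rw [measure_compl (blockSet_measurable hmeas hS₀) (measure_ne_top _ _),
          blockSet_prob hmeas hindep hident hS₀, measure_univ]
      rw [hcompl, pow_succ]
      rw [mul_comm ((1 - P (h 0 ⁻¹' S₀) ^ N) ^ m)]
      exact mul_le_mul' le_rfl ih

end prob

section pin
variable {Ω : Type*} [MeasurableSpace Ω] {P : Measure Ω} [IsProbabilityMeasure P]
  {Γ : ℝ} {h : ℤ → Ω → ℝ}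

lemma exists_pin (hΓ : 0 < Γ) (hmeas : ∀ n, Measurable (h n))
    (hnz : 0 < P {ω | h 0 ω ≠ 0}) :
    ∃ (S₀ : Set ℝ) (w : ℝ) (N : ℕ), MeasurableSet S₀ ∧ 0 < P (h 0 ⁻¹' S₀) ∧
      ∀ (M : ℤ) (ω : Ω) (y : ℝ), y ∈ Set.Icc (-Γ) Γ →
        (∀ j : ℕ, j < N → h (M - (j:ℤ)) ω ∈ S₀) → chainD Γ h N M y ω = w := by
  -- find a positive-probability tail
  have hcover : {ω | h 0 ω ≠ 0} ⊆
      ⋃ m : ℕ, (h 0 ⁻¹' Set.Ioi (1/(m+1)) ∪ h 0 ⁻¹' Set.Iio (-(1/(m+1)))) := by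
    intro ω hω
    obtain ⟨m, hm⟩ := exists_nat_one_div_lt (abs_pos.2 hω)
    refine Set.mem_iUnion.2 ⟨m, ?_⟩
    rcases lt_or_gt_of_ne (hω : h 0 ω ≠ 0) with hlt | hgt
    · right
      have : |h 0 ω| = -(h 0 ω) := abs_of_neg hlt
      simp only [Set.mem_preimage, Set.mem_Iio]
      push_cast at hm ⊢
      linarith [hm, this.symm.le, this.ge, this.le]
    · left
      have : |h 0 ω| = h 0 ω := abs_of_pos hgt
      simp only [Set.mem_preimage, Set.mem_Ioi]
      push_cast at hm ⊢
      linarith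
  have hpos : 0 < P (⋃ m : ℕ, (h 0 ⁻¹' Set.Ioi (1/(m+1)) ∪ h 0 ⁻¹' Set.Iio (-(1/(m+1))))) :=
    lt_of_lt_of_le hnz (measure_mono hcover)
  have hex : ∃ m : ℕ, 0 < P (h 0 ⁻¹' Set.Ioi (1/(m+1)) ∪ h 0 ⁻¹' Set.Iio (-(1/(m+1)))) := by
    by_contra hcon
    push_neg at hcon
    have : P (⋃ m : ℕ, (h 0 ⁻¹' Set.Ioi (1/(m+1)) ∪ h 0 ⁻¹' Set.Iio (-(1/(m+1))))) = 0 :=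
      measure_iUnion_null fun m => le_antisymm (hcon m) zero_le
    rw [this] at hpos
    exact lt_irrefl _ hpos
  obtain ⟨m, hm⟩ := hex
  set ε : ℝ := 1/(m+1) with hεdef
  have hε : 0 < ε := by positivity
  have hsplit : 0 < P (h 0 ⁻¹' Set.Ioi ε) ∨ 0 < P (h 0 ⁻¹' Set.Iio (-ε)) := by
    by_contra hcon
    push_neg at hcon
    have h1 : P (h 0 ⁻¹' Set.Ioi ε) = 0 := le_antisymm hcon.1 zero_le
    have h2 : P (h 0 ⁻¹' Set.Iio (-ε)) = 0 := le_antisymm hcon.2 zero_le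
    have := measure_union_le (μ := P) (h 0 ⁻¹' Set.Ioi ε) (h 0 ⁻¹' Set.Iio (-ε))
    rw [h1, h2, add_zero] at this
    exact absurd (le_antisymm this zero_le) (ne_of_gt hm)
  set N : ℕ := ⌈Γ/ε⌉₊ with hNdef
  have hN : Γ ≤ ε * N := by
    have h1 : Γ/ε ≤ (N:ℝ) := Nat.le_ceil _
    have h2 : Γ = ε * (Γ/ε) := by field_simp
    rw [h2]
    exact mul_le_mul_of_nonneg_left h1 hε.le
  rcases hsplit with hpos1 | hpos2
  · refine ⟨Set.Ioi ε, Γ, N, measurableSet_Ioi, hpos1, ?_⟩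
    intro M ω y hy hgood
    exact chainD_pin_top hΓ hε hN hy hgood
  · refine ⟨Set.Iio (-ε), -Γ, N, measurableSet_Iio, hpos2, ?_⟩
    intro M ω y hy hgood
    have hgood' : ∀ j : ℕ, j < N → ε < -(h (M - (j:ℤ)) ω) := by
      intro j hj
      have := hgood j hj
      simp only [Set.mem_Iio] at this
      linarith
    have hpin' := chainD_pin_top (h := fun i ω => -(h i ω)) hΓ hε hN
      (y := -y) ⟨by linarith [hy.2], by linarith [hy.1]⟩ hgood'
    rw [chainD_neg hΓ.le] at hpin'
    linarith

lemma block_coalesce {S₀ : Set ℝ} {w : ℝ} {N : ℕ}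
    (hpin : ∀ (M : ℤ) (ω : Ω) (y : ℝ), y ∈ Set.Icc (-Γ) Γ →
        (∀ j : ℕ, j < N → h (M - (j:ℤ)) ω ∈ S₀) → chainD Γ h N M y ω = w)
    (hΓ : 0 ≤ Γ) {n : ℤ} {b k k' : ℕ} {y y' : ℝ} {ω : Ω}
    (hω : ω ∈ blockSet h S₀ N (n - (b:ℤ) * N))
    (hy : y ∈ Set.Icc (-Γ) Γ) (hy' : y' ∈ Set.Icc (-Γ) Γ)
    (hk : (b+1) * N ≤ k) (hk' : (b+1) * N ≤ k') :
    chainD Γ h k n y ω = chainD Γ h k' n y' ω := by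
  have key : ∀ (j : ℕ) (z : ℝ), z ∈ Set.Icc (-Γ) Γ → (b+1)*N ≤ j →
      chainD Γ h j n z ω = chainD Γ h (b*N) n w ω := by
    intro j z hz hj
    have e : (b+1)*N = b*N + N := by ring
    obtain ⟨r, hr⟩ : ∃ r, j = b*N + (N + r) := ⟨j - (b+1)*N, by omega⟩
    subst hr
    rw [chainD_add]
    congr 1
    rw [chainD_add]
    have ecast : ∀ (j' : ℕ), (n - ((b*N : ℕ):ℤ)) - (j':ℤ) = (n - (b:ℤ)*(N:ℤ)) - (j':ℤ) := by
      intro j'; push_cast; ring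
    exact hpin (n - ((b*N : ℕ):ℤ)) ω _ (chainD_mem_Icc hΓ hz _ _ _)
      (fun j' hj' => by rw [ecast j']; exact hω j' hj')
  rw [key k y hy hk, key k' y' hy' hk']

lemma chainD_law (hmeas : ∀ n, Measurable (h n))
    (hindep : iIndepFun h P)
    (hident : ∀ n, Measure.map (h n) P = Measure.map (h 0) P) :
    ∀ (k : ℕ) (n n' : ℤ),
      Measure.map (fun ω => chainD Γ h k n 0 ω) P
        = Measure.map (fun ω => chainD Γ h k n' 0 ω) P := by
  intro k
  induction k with
  | zero => intro n n'; rfl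
  | succ k ih =>
      intro n n'
      have hmeasA : ∀ m : ℤ, Measurable (fun ω => chainD Γ h k m 0 ω) := fun m =>
        chainD_measurable (fun j _ => hmeas _) 0
      have pairlaw : ∀ m : ℤ, Measure.map (fun ω => (chainD Γ h k (m-1) 0 ω, h m ω)) P
          = (Measure.map (fun ω => chainD Γ h k (m-1) 0 ω) P).prod (Measure.map (h 0) P) := by
        intro m
        have hIndep : IndepFun (fun ω => chainD Γ h k (m-1) 0 ω) (h m) P := by
          rw [indepFun_iff_measure_inter_preimage_eq_mul]
          intro B C hB hC
          refine windowIndep hmeas hindep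
            (Set.Iic_disjoint_Ioi (le_refl (m-1)))
            (chainD_measurable_mWin (I := Set.Iic (m-1))
              (fun j _ => by simp only [Set.mem_Iic]; omega) 0 hB)
            (measurable_mWin (I := Set.Ioi (m-1)) (by simp) hC)
        rw [← hident m]
        exact (indepFun_iff_map_prod_eq_prod_map_map
          (hmeasA (m-1)).aemeasurable (hmeas m).aemeasurable).1 hIndep
      have hcomp : ∀ m : ℤ, (fun ω => chainD Γ h (k+1) m 0 ω)
          = (fun q : ℝ × ℝ => hatf Γ q.2 q.1) ∘ (fun ω => (chainD Γ h k (m-1) 0 ω, h m ω)) := by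
        intro m; rfl
      have hpairmeas : ∀ m : ℤ, Measurable (fun ω => (chainD Γ h k (m-1) 0 ω, h m ω)) :=
        fun m => (hmeasA (m-1)).prodMk (hmeas m)
      rw [hcomp n, hcomp n', ← Measure.map_map (measurable_hatf2 Γ) (hpairmeas n),
        ← Measure.map_map (measurable_hatf2 Γ) (hpairmeas n'), pairlaw n, pairlaw n',
        ih (n-1) (n'-1)]

end pin

section helpers

lemma continuous_hatf (Γ c : ℝ) : Continuous (hatf Γ c) := by
  unfold hatf
  exact (continuous_hatb Γ).comp (continuous_id.add continuous_const)

lemma measure_preimage_le_off {α β : Type*} [MeasurableSpace α] (μ : Measure α)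
    {f g : α → β} {Z : Set α} (hfg : ∀ x, x ∉ Z → f x = g x) (B : Set β) :
    μ (f ⁻¹' B) ≤ μ (g ⁻¹' B) + μ Z := by
  refine le_trans (measure_mono ?_) (measure_union_le _ _)
  intro x hx
  by_cases hz : x ∈ Z
  · exact Or.inr hz
  · exact Or.inl (by rw [Set.mem_preimage, ← hfg x hz]; exact hx)

lemma le_of_le_add_tendsto {a b : ℝ≥0∞} {c : ℕ → ℝ≥0∞}
    (hc : Filter.Tendsto c Filter.atTop (nhds 0))
    (hab : ∀ m, a ≤ b + c m) : a ≤ b := by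
  have ht : Filter.Tendsto (fun m => b + c m) Filter.atTop (nhds b) := by
    have := Filter.Tendsto.add (tendsto_const_nhds : Filter.Tendsto (fun _ : ℕ => b) Filter.atTop (nhds b)) hc
    simpa using this
  exact ge_of_tendsto' ht hab

end helpers


/-- For an IID field `(h_n)_{n ∈ ℤ}` with `ℙ(h_1 ≠ 0) > 0`, the hard-wall
reflected Markov chain admits a unique invariant probability on `[-Γ, Γ]`,
and there is a unique (up to a.s. equality) stationary process `(\widehat{l}_n)`
solving `\widehat{l}_n = \widehat{f}_{h_n}(\widehat{l}_{n-1})` for all `n`. -/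
theorem stmt_8 {Ω : Type*} [MeasurableSpace Ω] (P : Measure Ω) [IsProbabilityMeasure P]
    (Γ : ℝ) (hΓ : 0 < Γ) (h : ℤ → Ω → ℝ)
    (hmeas : ∀ n, Measurable (h n))
    (hindep : iIndepFun h P)
    (hident : ∀ n, Measure.map (h n) P = Measure.map (h 0) P)
    (hnz : 0 < P {ω | h 0 ω ≠ 0}) :
    (∃! ν : Measure ℝ, IsProbabilityMeasure ν ∧ ν (Set.Icc (-Γ) Γ) = 1 ∧
        Measure.map (fun p : ℝ × Ω => hatf Γ (h 0 p.2) p.1) (ν.prod P) = ν) ∧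
    ∃ L : ℤ → Ω → ℝ,
      (∀ n, Measurable (L n)) ∧
      (∀ n ω, L n ω = hatf Γ (h n ω) (L (n - 1) ω)) ∧
      (∀ n, Measure.map (L n) P = Measure.map (L 0) P) ∧
      ∀ L' : ℤ → Ω → ℝ, (∀ n ω, L' n ω = hatf Γ (h n ω) (L' (n - 1) ω)) →
        ∀ n, ∀ᵐ ω ∂P, L' n ω = L n ω := by
  classical
  obtain ⟨S₀, w, N, hS₀, hp, hpin⟩ := exists_pin hΓ hmeas hnz
  set q : ℝ≥0∞ := P (h 0 ⁻¹' S₀) ^ N with hqdef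
  set L : ℤ → Ω → ℝ := fun n ω => Filter.limsup (fun k => chainD Γ h k n 0 ω) Filter.atTop
    with hLdef
  have h0Icc : (0:ℝ) ∈ Set.Icc (-Γ) Γ := ⟨by linarith, hΓ.le⟩
  have hDIcc : ∀ (k : ℕ) (n : ℤ) (ω : Ω), chainD Γ h k n 0 ω ∈ Set.Icc (-Γ) Γ :=
    fun k n ω => chainD_mem_Icc hΓ.le h0Icc k n ω
  -- the recursion holds everywhere
  have hrec : ∀ n ω, L n ω = hatf Γ (h n ω) (L (n - 1) ω) := by
    intro n ω
    have hbdd : IsBoundedUnder (· ≤ ·) Filter.atTop (fun k => chainD Γ h k (n-1) 0 ω) :=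
      Filter.isBoundedUnder_of ⟨Γ, fun k => (hDIcc k (n-1) ω).2⟩
    have hcobdd : IsCoboundedUnder (· ≤ ·) Filter.atTop (fun k => chainD Γ h k (n-1) 0 ω) :=
      IsBoundedUnder.isCoboundedUnder_le
        (Filter.isBoundedUnder_of ⟨-Γ, fun k => (hDIcc k (n-1) ω).1⟩)
    have hmap := (monotone_hatf Γ (h n ω)).map_limsup_of_continuousAt
      (a := fun k => chainD Γ h k (n-1) 0 ω)
      ((continuous_hatf Γ (h n ω)).continuousAt) hbdd hcobdd
    calc L n ω = Filter.limsup (fun k => chainD Γ h (k+1) n 0 ω) Filter.atTop :=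
          (Filter.limsup_nat_add (fun k => chainD Γ h k n 0 ω) 1).symm
      _ = Filter.limsup ((hatf Γ (h n ω)) ∘ (fun k => chainD Γ h k (n-1) 0 ω)) Filter.atTop :=
          rfl
      _ = hatf Γ (h n ω) (L (n-1) ω) := hmap.symm
  have hmeasD : ∀ (k : ℕ) (n : ℤ), Measurable (fun ω => chainD Γ h k n 0 ω) :=
    fun k n => chainD_measurable (fun j _ => hmeas _) 0
  have hmeasL : ∀ n, Measurable (L n) := fun n => Measurable.limsup (fun k => hmeasD k n)
  have hLIcc : ∀ n ω, L n ω ∈ Set.Icc (-Γ) Γ := fun n ω => by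
    rw [hrec n ω]; exact hatf_mem_Icc hΓ.le _ _
  -- bad events
  set Wc : ℤ → ℕ → Set Ω := fun n m =>
    ⋂ b ∈ Finset.range m, (blockSet h S₀ N (n - (b:ℤ) * N))ᶜ with hWcdef
  have hWcle : ∀ n m, P (Wc n m) ≤ (1 - q)^m := fun n m =>
    noGood_prob_le hmeas hindep hident hS₀ N n m
  have hq0 : q ≠ 0 := pow_ne_zero _ hp.ne'
  have hq1 : (1:ℝ≥0∞) - q < 1 := ENNReal.sub_lt_self ENNReal.one_ne_top one_ne_zero hq0
  have htend : Filter.Tendsto (fun m => ((1:ℝ≥0∞) - q)^m) Filter.atTop (nhds 0) :=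
    ENNReal.tendsto_pow_atTop_nhds_zero_of_lt_one hq1
  have hWmem : ∀ n m ω, ω ∉ Wc n m → ∃ b, b < m ∧ ω ∈ blockSet h S₀ N (n - (b:ℤ) * N) := by
    intro n m ω hω
    by_contra hcon
    push_neg at hcon
    exact hω (Set.mem_iInter₂.2 fun b hb => hcon b (Finset.mem_range.1 hb))
  -- off the bad set, L n equals the finite chain of length ≥ m * N
  have hLD : ∀ (n : ℤ) (m : ℕ) (ω : Ω), ω ∉ Wc n m → ∀ k, m * N ≤ k →
      L n ω = chainD Γ h k n 0 ω := by
    intro n m ω hω k hk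
    obtain ⟨b, hb, hblock⟩ := hWmem n m ω hω
    have hbk : (b+1) * N ≤ k := le_trans (Nat.mul_le_mul_right _ (by omega)) hk
    have heq : ∀ j, (b+1)*N ≤ j → chainD Γ h j n 0 ω = chainD Γ h ((b+1)*N) n 0 ω :=
      fun j hj => block_coalesce hpin hΓ.le hblock h0Icc h0Icc hj le_rfl
    have hLc : L n ω = chainD Γ h ((b+1)*N) n 0 ω := by
      have hev : (fun j => chainD Γ h j n 0 ω) =ᶠ[Filter.atTop]
          (fun _ => chainD Γ h ((b+1)*N) n 0 ω) :=
        Filter.eventually_atTop.2 ⟨(b+1)*N, fun j hj => heq j hj⟩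
      show Filter.limsup (fun k => chainD Γ h k n 0 ω) Filter.atTop = _
      rw [Filter.limsup_congr hev, Filter.limsup_const]
    rw [hLc, heq k hbk]
  -- stationarity of L
  have hstat : ∀ n, Measure.map (L n) P = Measure.map (L 0) P := by
    have ineq : ∀ (n₁ n₂ : ℤ) (B : Set ℝ), MeasurableSet B →
        P (L n₁ ⁻¹' B) ≤ P (L n₂ ⁻¹' B) := by
      intro n₁ n₂ B hB
      have hc0 : Filter.Tendsto (fun m : ℕ => ((1:ℝ≥0∞)-q)^m + ((1:ℝ≥0∞)-q)^m)
          Filter.atTop (nhds 0) := by simpa using htend.add htend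
      refine le_of_le_add_tendsto hc0 fun m => ?_
      have step : P ((fun ω => chainD Γ h (m*N) n₁ 0 ω) ⁻¹' B)
          = P ((fun ω => chainD Γ h (m*N) n₂ 0 ω) ⁻¹' B) := by
        rw [← Measure.map_apply (hmeasD _ n₁) hB, ← Measure.map_apply (hmeasD _ n₂) hB,
          chainD_law hmeas hindep hident (m*N) n₁ n₂]
      calc P (L n₁ ⁻¹' B)
          ≤ P ((fun ω => chainD Γ h (m*N) n₁ 0 ω) ⁻¹' B) + P (Wc n₁ m) :=
            measure_preimage_le_off P (fun ω hω => hLD n₁ m ω hω (m*N) le_rfl) B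
        _ ≤ P ((fun ω => chainD Γ h (m*N) n₁ 0 ω) ⁻¹' B) + (1-q)^m :=
            add_le_add_right (hWcle n₁ m) _
        _ = P ((fun ω => chainD Γ h (m*N) n₂ 0 ω) ⁻¹' B) + (1-q)^m := by rw [step]
        _ ≤ (P (L n₂ ⁻¹' B) + P (Wc n₂ m)) + (1-q)^m :=
            add_le_add_left (measure_preimage_le_off P
              (fun ω hω => (hLD n₂ m ω hω (m*N) le_rfl).symm) B) _
        _ ≤ (P (L n₂ ⁻¹' B) + (1-q)^m) + (1-q)^m :=
            add_le_add_left (add_le_add_right (hWcle n₂ m) _) _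
        _ = P (L n₂ ⁻¹' B) + ((1-q)^m + (1-q)^m) := by rw [add_assoc]
    intro n
    refine Measure.ext fun B hB => ?_
    rw [Measure.map_apply (hmeasL n) hB, Measure.map_apply (hmeasL 0) hB]
    exact le_antisymm (ineq n 0 B hB) (ineq 0 n B hB)
  -- uniqueness of stationary solutions
  have huniq : ∀ L' : ℤ → Ω → ℝ, (∀ n ω, L' n ω = hatf Γ (h n ω) (L' (n - 1) ω)) →
      ∀ n, ∀ᵐ ω ∂P, L' n ω = L n ω := by
    intro L' hL' n
    have hL'Icc : ∀ (nn : ℤ) (ω : Ω), L' nn ω ∈ Set.Icc (-Γ) Γ := fun nn ω => by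
      rw [hL' nn ω]; exact hatf_mem_Icc hΓ.le _ _
    have hsub : {ω | ¬ (L' n ω = L n ω)} ⊆ ⋂ m, Wc n m := by
      intro ω hω
      simp only [Set.mem_iInter]
      intro m
      by_contra hmem
      obtain ⟨b, hb, hblock⟩ := hWmem n m ω hmem
      have e1 : L' n ω = chainD Γ h ((b+1)*N) n (L' (n - (((b+1)*N : ℕ) : ℤ)) ω) ω :=
        chainD_sol hL' _ n ω
      have e2 : L n ω = chainD Γ h ((b+1)*N) n (L (n - (((b+1)*N : ℕ) : ℤ)) ω) ω :=
        chainD_sol hrec _ n ω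
      exact hω (by
        rw [e1, e2]
        exact block_coalesce hpin hΓ.le hblock (hL'Icc _ _) (hLIcc _ _) le_rfl le_rfl)
    have hZ : P (⋂ m, Wc n m) = 0 := by
      refine le_antisymm ?_ zero_le
      refine le_of_le_add_tendsto htend fun m => ?_
      rw [zero_add]
      exact le_trans (measure_mono (Set.iInter_subset _ m)) (hWcle n m)
    exact ae_iff.2 (measure_mono_null hsub hZ)
  -- the invariant measure
  set ν : Measure ℝ := Measure.map (L 0) P with hνdef
  have hprobν : IsProbabilityMeasure ν := Measure.isProbabilityMeasure_map (hmeasL 0).aemeasurable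
  have hIccν : ν (Set.Icc (-Γ) Γ) = 1 := by
    rw [hνdef, Measure.map_apply (hmeasL 0) measurableSet_Icc]
    have : L 0 ⁻¹' (Set.Icc (-Γ) Γ) = Set.univ := Set.eq_univ_of_forall fun ω => hLIcc 0 ω
    rw [this, measure_univ]
  -- rewriting the invariance equation
  have hrw : ∀ (μν : Measure ℝ) [SFinite μν],
      Measure.map (fun p : ℝ × Ω => hatf Γ (h 0 p.2) p.1) (μν.prod P)
        = Measure.map (fun z : ℝ × ℝ => hatf Γ z.2 z.1) (μν.prod (Measure.map (h 0) P)) := by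
    intro μν _
    have hcomp : (fun p : ℝ × Ω => hatf Γ (h 0 p.2) p.1)
        = (fun z : ℝ × ℝ => hatf Γ z.2 z.1) ∘ (Prod.map id (h 0)) := rfl
    rw [hcomp, ← Measure.map_map (measurable_hatf2 Γ) (measurable_id.prodMap (hmeas 0)),
      ← Measure.map_prod_map _ _ measurable_id (hmeas 0), Measure.map_id]
  have hinvν : Measure.map (fun p : ℝ × Ω => hatf Γ (h 0 p.2) p.1) (ν.prod P) = ν := by
    have hIndepLh : IndepFun (L 0) (h 1) P := by
      rw [indepFun_iff_measure_inter_preimage_eq_mul]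
      intro B C hB hC
      refine windowIndep hmeas hindep (Set.Iic_disjoint_Ioi (le_refl (0:ℤ))) ?_ ?_
      · have hL0win : Measurable[mWin h (Set.Iic 0)] (L 0) := by
          refine Measurable.limsup fun k => ?_
          exact chainD_measurable_mWin (fun j hj => by simp only [Set.mem_Iic]; omega) 0
        exact hL0win hB
      · exact measurable_mWin (by simp : (1:ℤ) ∈ Set.Ioi (0:ℤ)) hC
    have hpair : Measure.map (fun ω => (L 0 ω, h 1 ω)) P = ν.prod (Measure.map (h 0) P) := by
      rw [← hident 1]
      exact (indepFun_iff_map_prod_eq_prod_map_map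
        (hmeasL 0).aemeasurable (hmeas 1).aemeasurable).1 hIndepLh
    rw [hrw ν, ← hpair, Measure.map_map (measurable_hatf2 Γ) ((hmeasL 0).prodMk (hmeas 1))]
    have hcomp : ((fun z : ℝ × ℝ => hatf Γ z.2 z.1) ∘ (fun ω => (L 0 ω, h 1 ω))) = L 1 := by
      funext ω
      have e := hrec 1 ω
      norm_num at e
      exact e.symm
    rw [hcomp]
    exact hstat 1
  -- uniqueness of the invariant measure
  have hinvuniq : ∀ ν' : Measure ℝ, IsProbabilityMeasure ν' → ν' (Set.Icc (-Γ) Γ) = 1 →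
      Measure.map (fun p : ℝ × Ω => hatf Γ (h 0 p.2) p.1) (ν'.prod P) = ν' → ν' = ν := by
    intro ν' hprob' hIcc' hinv'
    have hinv2 : Measure.map (fun z : ℝ × ℝ => hatf Γ z.2 z.1)
        (ν'.prod (Measure.map (h 0) P)) = ν' := by
      rw [← hrw ν']; exact hinv'
    set μ : Measure (ℝ × Ω) := ν'.prod P with hμdef
    have hXmeas : ∀ (k : ℕ) (n : ℤ), Measurable (fun p : ℝ × Ω => chainD Γ h k n p.1 p.2) :=
      fun k n => chainD_measurable2 hmeas k n
    have hXlaw : ∀ k : ℕ, Measure.map (fun p : ℝ × Ω => chainD Γ h k (k:ℤ) p.1 p.2) μ = ν' := by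
      intro k
      induction k with
      | zero =>
          have e : (fun p : ℝ × Ω => chainD Γ h 0 ((0:ℕ):ℤ) p.1 p.2) = Prod.fst := rfl
          rw [e, hμdef, Measure.map_fst_prod, measure_univ, one_smul]
      | succ k ih =>
          have hg : Measurable (fun p : ℝ × Ω => h ((k:ℤ)+1) p.2) :=
            (hmeas _).comp measurable_snd
          have hIndepX : IndepFun (fun p : ℝ × Ω => chainD Γ h k (k:ℤ) p.1 p.2)
              (fun p : ℝ × Ω => h ((k:ℤ)+1) p.2) μ := by
            rw [indepFun_iff_measure_inter_preimage_eq_mul]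
            intro B C hB hC
            have hXB : MeasurableSet ((fun p : ℝ × Ω => chainD Γ h k (k:ℤ) p.1 p.2) ⁻¹' B) :=
              (hXmeas k k) hB
            have hSmeas : MeasurableSet
                ((fun p : ℝ × Ω => chainD Γ h k (k:ℤ) p.1 p.2) ⁻¹' B ∩
                  (fun p : ℝ × Ω => h ((k:ℤ)+1) p.2) ⁻¹' C) := hXB.inter (hg hC)
            have hgC : μ ((fun p : ℝ × Ω => h ((k:ℤ)+1) p.2) ⁻¹' C)
                = P (h ((k:ℤ)+1) ⁻¹' C) := by
              have e : (fun p : ℝ × Ω => h ((k:ℤ)+1) p.2) ⁻¹' C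
                  = (Set.univ : Set ℝ) ×ˢ (h ((k:ℤ)+1) ⁻¹' C) := by
                ext p; simp [Set.mem_prod]
              rw [hμdef, e, Measure.prod_prod, measure_univ, one_mul]
            have hptw : ∀ x : ℝ, P (Prod.mk x ⁻¹'
                ((fun p : ℝ × Ω => chainD Γ h k (k:ℤ) p.1 p.2) ⁻¹' B ∩
                  (fun p : ℝ × Ω => h ((k:ℤ)+1) p.2) ⁻¹' C))
                = P (Prod.mk x ⁻¹' ((fun p : ℝ × Ω => chainD Γ h k (k:ℤ) p.1 p.2) ⁻¹' B))
                    * P (h ((k:ℤ)+1) ⁻¹' C) := by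
              intro x
              have hEq : Prod.mk x ⁻¹'
                  ((fun p : ℝ × Ω => chainD Γ h k (k:ℤ) p.1 p.2) ⁻¹' B ∩
                    (fun p : ℝ × Ω => h ((k:ℤ)+1) p.2) ⁻¹' C)
                  = ((fun ω => chainD Γ h k (k:ℤ) x ω) ⁻¹' B) ∩ (h ((k:ℤ)+1) ⁻¹' C) := rfl
              have hEq2 : Prod.mk x ⁻¹'
                  ((fun p : ℝ × Ω => chainD Γ h k (k:ℤ) p.1 p.2) ⁻¹' B)
                  = (fun ω => chainD Γ h k (k:ℤ) x ω) ⁻¹' B := rfl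
              rw [hEq, hEq2]
              refine windowIndep hmeas hindep (Set.Iic_disjoint_Ioi (le_refl (k:ℤ))) ?_ ?_
              · exact chainD_measurable_mWin (I := Set.Iic (k:ℤ))
                  (fun j hj => by simp only [Set.mem_Iic]; omega) x hB
              · exact measurable_mWin (by simp : (k:ℤ)+1 ∈ Set.Ioi (k:ℤ)) hC
            calc μ ((fun p : ℝ × Ω => chainD Γ h k (k:ℤ) p.1 p.2) ⁻¹' B ∩
                  (fun p : ℝ × Ω => h ((k:ℤ)+1) p.2) ⁻¹' C)
                = ∫⁻ x, P (Prod.mk x ⁻¹'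
                    ((fun p : ℝ × Ω => chainD Γ h k (k:ℤ) p.1 p.2) ⁻¹' B ∩
                      (fun p : ℝ × Ω => h ((k:ℤ)+1) p.2) ⁻¹' C)) ∂ν' := by
                  rw [hμdef, Measure.prod_apply hSmeas]
              _ = ∫⁻ x, P (Prod.mk x ⁻¹'
                    ((fun p : ℝ × Ω => chainD Γ h k (k:ℤ) p.1 p.2) ⁻¹' B))
                    * P (h ((k:ℤ)+1) ⁻¹' C) ∂ν' := lintegral_congr hptw
              _ = (∫⁻ x, P (Prod.mk x ⁻¹'
                    ((fun p : ℝ × Ω => chainD Γ h k (k:ℤ) p.1 p.2) ⁻¹' B)) ∂ν')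
                    * P (h ((k:ℤ)+1) ⁻¹' C) :=
                  lintegral_mul_const _ (measurable_measure_prodMk_left hXB)
              _ = μ ((fun p : ℝ × Ω => chainD Γ h k (k:ℤ) p.1 p.2) ⁻¹' B)
                    * P (h ((k:ℤ)+1) ⁻¹' C) := by
                  rw [hμdef, Measure.prod_apply hXB]
              _ = μ ((fun p : ℝ × Ω => chainD Γ h k (k:ℤ) p.1 p.2) ⁻¹' B)
                    * μ ((fun p : ℝ × Ω => h ((k:ℤ)+1) p.2) ⁻¹' C) := by rw [hgC]
          have pairlaw : Measure.map
              (fun p : ℝ × Ω => (chainD Γ h k (k:ℤ) p.1 p.2, h ((k:ℤ)+1) p.2)) μ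
              = ν'.prod (Measure.map (h 0) P) := by
            rw [(indepFun_iff_map_prod_eq_prod_map_map
              (hXmeas k k).aemeasurable hg.aemeasurable).1 hIndepX, ih]
            congr 1
            have e : (fun p : ℝ × Ω => h ((k:ℤ)+1) p.2) = (h ((k:ℤ)+1)) ∘ Prod.snd := rfl
            rw [e, ← Measure.map_map (hmeas _) measurable_snd, hμdef, Measure.map_snd_prod,
              measure_univ, one_smul, hident]
          have ecast : ((k+1:ℕ):ℤ) = (k:ℤ)+1 := by push_cast; ring
          have hcomp : (fun p : ℝ × Ω => chainD Γ h (k+1) ((k:ℤ)+1) p.1 p.2)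
              = (fun z : ℝ × ℝ => hatf Γ z.2 z.1)
                ∘ (fun p : ℝ × Ω => (chainD Γ h k (k:ℤ) p.1 p.2, h ((k:ℤ)+1) p.2)) := by
            funext p
            show hatf Γ (h ((k:ℤ)+1) p.2) (chainD Γ h k ((k:ℤ)+1-1) p.1 p.2) = _
            norm_num
          rw [ecast, hcomp, ← Measure.map_map (measurable_hatf2 Γ)
            ((hXmeas k k).prodMk hg), pairlaw, hinv2]
    have hν'c : ν' ((Set.Icc (-Γ) Γ)ᶜ) = 0 := by
      rw [measure_compl measurableSet_Icc (measure_ne_top _ _), hIcc', measure_univ, tsub_self]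
    have hbad : ∀ m : ℕ, μ (((Set.Icc (-Γ) Γ)ᶜ ×ˢ (Set.univ : Set Ω))
        ∪ ((Set.univ : Set ℝ) ×ˢ Wc ((m*N : ℕ):ℤ) m)) ≤ (1-q)^m := by
      intro m
      refine le_trans (measure_union_le _ _) ?_
      rw [hμdef, Measure.prod_prod, Measure.prod_prod, hν'c, zero_mul, zero_add,
        measure_univ, one_mul]
      exact hWcle _ m
    have hXLeq : ∀ (m : ℕ) (p : ℝ × Ω),
        p ∉ (((Set.Icc (-Γ) Γ)ᶜ ×ˢ (Set.univ : Set Ω))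
          ∪ ((Set.univ : Set ℝ) ×ˢ Wc ((m*N:ℕ):ℤ) m)) →
        chainD Γ h (m*N) ((m*N:ℕ):ℤ) p.1 p.2 = L ((m*N:ℕ):ℤ) p.2 := by
      intro m p hp
      simp only [Set.mem_union, Set.mem_prod, Set.mem_univ, and_true, true_and,
        Set.mem_compl_iff, not_or] at hp
      obtain ⟨h1, h2⟩ := hp
      have hp1 : p.1 ∈ Set.Icc (-Γ) Γ := not_not.1 h1
      obtain ⟨b, hb, hblock⟩ := hWmem _ m p.2 h2
      have hLc : L ((m*N:ℕ):ℤ) p.2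
          = chainD Γ h (m*N) ((m*N:ℕ):ℤ) (L (((m*N:ℕ):ℤ) - ((m*N:ℕ):ℤ)) p.2) p.2 :=
        chainD_sol hrec (m*N) _ p.2
      rw [hLc]
      exact block_coalesce hpin hΓ.le hblock hp1 (hLIcc _ _)
        (Nat.mul_le_mul_right _ (by omega)) (Nat.mul_le_mul_right _ (by omega))
    refine Measure.ext fun B hB => ?_
    have hLB : ∀ m : ℕ, μ ((fun p : ℝ × Ω => L ((m*N:ℕ):ℤ) p.2) ⁻¹' B) = ν B := by
      intro m
      have e : (fun p : ℝ × Ω => L ((m*N:ℕ):ℤ) p.2) ⁻¹' B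
          = (Set.univ : Set ℝ) ×ˢ (L ((m*N:ℕ):ℤ) ⁻¹' B) := by
        ext p; simp [Set.mem_prod]
      rw [hμdef, e, Measure.prod_prod, measure_univ, one_mul,
        ← Measure.map_apply (hmeasL _) hB, hstat]
    have hν'B : ∀ m : ℕ,
        ν' B = μ ((fun p : ℝ × Ω => chainD Γ h (m*N) ((m*N:ℕ):ℤ) p.1 p.2) ⁻¹' B) :=
      fun m => by rw [← hXlaw (m*N), Measure.map_apply (hXmeas _ _) hB]
    refine le_antisymm ?_ ?_
    · refine le_of_le_add_tendsto htend fun m => ?_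
      calc ν' B = μ ((fun p : ℝ × Ω => chainD Γ h (m*N) ((m*N:ℕ):ℤ) p.1 p.2) ⁻¹' B) := hν'B m
        _ ≤ μ ((fun p : ℝ × Ω => L ((m*N:ℕ):ℤ) p.2) ⁻¹' B)
            + μ (((Set.Icc (-Γ) Γ)ᶜ ×ˢ (Set.univ : Set Ω))
              ∪ ((Set.univ : Set ℝ) ×ˢ Wc ((m*N:ℕ):ℤ) m)) :=
            measure_preimage_le_off μ (fun p hp => hXLeq m p hp) B
        _ ≤ ν B + (1-q)^m := add_le_add (le_of_eq (hLB m)) (hbad m)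
    · refine le_of_le_add_tendsto htend fun m => ?_
      calc ν B = μ ((fun p : ℝ × Ω => L ((m*N:ℕ):ℤ) p.2) ⁻¹' B) := (hLB m).symm
        _ ≤ μ ((fun p : ℝ × Ω => chainD Γ h (m*N) ((m*N:ℕ):ℤ) p.1 p.2) ⁻¹' B)
            + μ (((Set.Icc (-Γ) Γ)ᶜ ×ˢ (Set.univ : Set Ω))
              ∪ ((Set.univ : Set ℝ) ×ˢ Wc ((m*N:ℕ):ℤ) m)) :=
            measure_preimage_le_off μ (fun p hp => (hXLeq m p hp).symm) B
        _ ≤ ν' B + (1-q)^m := add_le_add (le_of_eq (hν'B m).symm) (hbad m)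
  exact ⟨⟨ν, ⟨hprobν, hIccν, hinvν⟩, fun ν' hν' => hinvuniq ν' hν'.1 hν'.2.1 hν'.2.2⟩,
    L, hmeasL, hrec, hstat, huniq⟩
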